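/- arXiv:1809.07376 — 2 statements merged into one kernel-verified Lean document; each statement's English description precedes it below -/
import Mathlib

section
/- Optimality conditions generated by the aggregate ADMM subproblem. Let f : ℝ^n → (−∞, +∞] be convex, closed, and proper, let K ⊆ ℝ^m be a nonempty closed convex cone, let A : ℝ^n → ℝ^m be linear, r ∈ ℝ^m, and γ > 0. Suppose (x̂, t̂) is a global minimizer over (x, t) ∈ ℝ^n × K of f(x) + (1/(2γ)) ‖A x + r − t‖², and set ŷ := (1/γ) Π_{K∘}(A x̂ + r). Then: (i) t̂ = Π_K(A x̂ + r) ∈ K; (ii) −Aᵀ ŷ ∈ ∂f(x̂); and (iii) ŷ ∈ N_K(t̂). -/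
open Filter Topology RealInnerProductSpace

open Classical in
/-- Euclidean projection onto a set (well-defined on nonempty closed convex sets). -/
noncomputable def projSet {E : Type*} [NormedAddCommGroup E] [InnerProductSpace ℝ E]
    (C : Set E) (z : E) : E :=
  if h : ∃ p ∈ C, ∀ q ∈ C, ‖z - p‖ ≤ ‖z - q‖ then h.choose else z

/-- Polar cone of a set. -/
def polarSet {E : Type*} [NormedAddCommGroup E] [InnerProductSpace ℝ E] (C : Set E) : Set E :=
  {y | ∀ x ∈ C, ⟪x, y⟫ ≤ 0}

/-- Normal cone of a convex set `C` at a point `x`. -/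
def nCone {E : Type*} [NormedAddCommGroup E] [InnerProductSpace ℝ E]
    (C : Set E) (x : E) : Set E :=
  {u | ∀ w ∈ C, ⟪u, w - x⟫ ≤ 0}

/-- Convex (Fenchel) conjugate of an extended-real-valued function. -/
noncomputable def econj {E : Type*} [NormedAddCommGroup E] [InnerProductSpace ℝ E]
    (f : E → EReal) (y : E) : EReal :=
  ⨆ x, ((⟪y, x⟫ : ℝ) : EReal) - f x

open Classical in
/-- Extended-real-valued indicator function of a set. -/
noncomputable def eindicator {E : Type*} (C : Set E) (y : E) : EReal :=
  if y ∈ C then 0 else ⊤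

/-- Subdifferential of an extended-real-valued function. -/
def ESubdiff {E : Type*} [NormedAddCommGroup E] [InnerProductSpace ℝ E]
    (f : E → EReal) (x : E) : Set E :=
  {u | ∀ v, f x + ((⟪u, v - x⟫ : ℝ) : EReal) ≤ f v}

/-- Convexity of an extended-real-valued function. -/
def EConvexFn {E : Type*} [AddCommMonoid E] [Module ℝ E] (f : E → EReal) : Prop :=
  ∀ x y : E, ∀ a b : ℝ, 0 ≤ a → 0 ≤ b → a + b = 1 →
    f (a • x + b • y) ≤ (a : EReal) * f x + (b : EReal) * f y

/-- Properness of an extended-real-valued function. -/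
def EProper {E : Type*} (f : E → EReal) : Prop :=
  (∀ x, f x ≠ ⊥) ∧ ∃ x, f x ≠ ⊤

/-!
Minimizing in `t` with `x̂` fixed makes `t̂` the nearest point of `K` to `z = A x̂ + r`, i.e.
`z - t̂ ∈ N_K(t̂)`. Because `K` is a cone, testing this against `2 t̂` and `t̂ / 2` gives
`⟪z - t̂, t̂⟫ = 0`, hence `z - t̂ ∈ K°` and, by the same variational inequality for `K°`,
Moreau's decomposition `Π_{K°} z = z - t̂`. Minimizing in `x` with `t̂` fixed, convexity of `f`
along the segment from `x̂` to `v` and letting the step tend to `0` give `-∇φ(x̂) ∈ ∂f(x̂)` for the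
smooth part `φ x = ‖A x + r - t̂‖² / (2γ)`, whose gradient is `Aᵀ (z - t̂) / γ`.
-/

section Projection

variable {E : Type*} [NormedAddCommGroup E] [InnerProductSpace ℝ E] {C : Set E} {z a : E}

theorem forall_norm_sub_le_iff_sub_mem_nCone (hC : Convex ℝ C) (ha : a ∈ C) :
    (∀ q ∈ C, ‖z - a‖ ≤ ‖z - q‖) ↔ z - a ∈ nCone C a := by
  have : Nonempty C := ⟨⟨a, ha⟩⟩
  rw [nCone, Set.mem_ofPred_eq, ← norm_eq_iInf_iff_real_inner_le_zero hC ha]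
  refine ⟨fun hm => le_antisymm (le_ciInf fun w => hm w w.2) ?_, fun h q hq => ?_⟩
  · exact ciInf_le ⟨0, by rintro x ⟨w, rfl⟩; exact norm_nonneg _⟩ (⟨a, ha⟩ : C)
  · rw [h]
    exact ciInf_le ⟨0, by rintro x ⟨w, rfl⟩; exact norm_nonneg _⟩ (⟨q, hq⟩ : C)

theorem projSet_eq_of_sub_mem_nCone (hC : Convex ℝ C) (ha : a ∈ C) (hz : z - a ∈ nCone C a) :
    projSet C z = a := by
  have hex : ∃ p ∈ C, ∀ q ∈ C, ‖z - p‖ ≤ ‖z - q‖ :=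
    ⟨a, ha, (forall_norm_sub_le_iff_sub_mem_nCone hC ha).2 hz⟩
  obtain ⟨hpC, hpm⟩ := hex.choose_spec
  rw [projSet, dif_pos hex]
  set p := hex.choose
  have hp : z - p ∈ nCone C p := (forall_norm_sub_le_iff_sub_mem_nCone hC hpC).1 hpm
  -- adding the two variational inequalities gives `‖a - p‖² ≤ 0`
  have hsum : ⟪a - p, a - p⟫ = ⟪z - p, a - p⟫ + ⟪z - a, p - a⟫ := by
    rw [← neg_sub a p, inner_neg_right, ← sub_eq_add_neg, ← inner_sub_left]
    congr 1
    abel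
  have h₁ : ⟪z - p, a - p⟫ ≤ 0 := hp a ha
  have h₂ : ⟪z - a, p - a⟫ ≤ 0 := hz p hpC
  have : a - p = 0 := real_inner_self_nonpos.1 (by linarith)
  exact (sub_eq_zero.1 this).symm

theorem convex_polarSet (C : Set E) : Convex ℝ (polarSet C) := by
  intro y₁ hy₁ y₂ hy₂ s t hs ht _ w hw
  rw [inner_add_right, real_inner_smul_right, real_inner_smul_right]
  nlinarith [hy₁ w hw, hy₂ w hw]

theorem inner_sub_self_eq_zero_of_sub_mem_nCone (hcone : ∀ c : ℝ, 0 < c → ∀ x ∈ C, c • x ∈ C)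
    (ha : a ∈ C) (hz : z - a ∈ nCone C a) :
    ⟪z - a, a⟫ = 0 := by
  have hup := hz _ (hcone 2 two_pos a ha)
  have hdown := hz _ (hcone (1 / 2) one_half_pos a ha)
  rw [show (2 : ℝ) • a - a = a by module] at hup
  rw [show (1 / 2 : ℝ) • a - a = (-(1 / 2) : ℝ) • a by module, real_inner_smul_right] at hdown
  linarith

theorem projSet_polarSet_eq_sub_of_sub_mem_nCone (hcone : ∀ c : ℝ, 0 < c → ∀ x ∈ C, c • x ∈ C)
    (ha : a ∈ C) (hz : z - a ∈ nCone C a) :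
    projSet (polarSet C) z = z - a := by
  have horth := inner_sub_self_eq_zero_of_sub_mem_nCone hcone ha hz
  have hmem : z - a ∈ polarSet C := fun w hw => by
    have := hz w hw
    rw [inner_sub_right, horth] at this
    rw [real_inner_comm]
    linarith
  refine projSet_eq_of_sub_mem_nCone (convex_polarSet C) hmem fun w hw => ?_
  rw [sub_sub_cancel, inner_sub_right, real_inner_comm (z - a) a, horth, sub_zero]
  exact hw a ha

end Projection

theorem EProper.ne_top_of_forall_le_add {E : Type*} {f : E → EReal} {φ : E → ℝ} {x : E}
    (hf : EProper f) (hmin : ∀ y, f x + (φ x : EReal) ≤ f y + φ y) : f x ≠ ⊤ := by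
  obtain ⟨y, hy⟩ := hf.2
  intro hx
  have h := hmin y
  rw [hx, EReal.top_add_coe, top_le_iff] at h
  exact EReal.add_ne_top hy (EReal.coe_ne_top _) h

section Subdifferential

variable {E : Type*} [NormedAddCommGroup E] [InnerProductSpace ℝ E] {f : E → EReal} {φ : E → ℝ}
  {x : E}

theorem neg_mem_eSubdiff_of_forall_le_add [CompleteSpace E] {g : E} (hf : EConvexFn f)
    (hbot : ∀ y, f y ≠ ⊥) (hx : f x ≠ ⊤) (hφ : HasGradientAt φ g x)
    (hmin : ∀ y, f x + (φ x : EReal) ≤ f y + φ y) : -g ∈ ESubdiff f x := by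
  intro v
  rcases eq_or_ne (f v) ⊤ with hv | hv
  · rw [hv]
    exact le_top
  obtain ⟨a, ha⟩ : ∃ a : ℝ, f x = a := ⟨_, (EReal.coe_toReal hx (hbot x)).symm⟩
  obtain ⟨b, hb⟩ : ∃ b : ℝ, f v = b := ⟨_, (EReal.coe_toReal hv (hbot v)).symm⟩
  have hslope : ∀ s ∈ Set.Ioc (0 : ℝ) 1, a - b ≤ s⁻¹ • (φ (x + s • (v - x)) - φ x) := by
    rintro s ⟨hs₀, hs₁⟩
    have hseg : (1 - s) • x + s • v = x + s • (v - x) := by module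
    have key : ((a + φ x : ℝ) : EReal) ≤
        (((1 - s) * a + s * b + φ (x + s • (v - x)) : ℝ) : EReal) :=
      calc ((a + φ x : ℝ) : EReal) = f x + φ x := by rw [ha, EReal.coe_add]
        _ ≤ f (x + s • (v - x)) + φ (x + s • (v - x)) := hmin _
        _ ≤ ((1 - s : ℝ) : EReal) * f x + (s : EReal) * f v + φ (x + s • (v - x)) := by
          gcongr
          rw [← hseg]
          exact hf x v (1 - s) s (by linarith) hs₀.le (by ring)
        _ = _ := by rw [ha, hb]; norm_cast
    rw [EReal.coe_le_coe_iff] at key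
    rw [smul_eq_mul, le_inv_mul_iff₀ hs₀]
    linarith
  have hlim : Tendsto (fun s : ℝ => s⁻¹ • (φ (x + s • (v - x)) - φ x)) (𝓝[>] 0)
      (𝓝 ⟪g, v - x⟫) :=
    ((hasGradientAt_iff_hasFDerivAt.1 hφ).hasLineDerivAt (v - x)).tendsto_slope_zero_right
  have hle : a - b ≤ ⟪g, v - x⟫ :=
    ge_of_tendsto hlim (mem_of_superset (Ioc_mem_nhdsGT one_pos) hslope)
  rw [ha, hb, ← EReal.coe_add, EReal.coe_le_coe_iff, inner_neg_left]
  linarith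

end Subdifferential

theorem hasGradientAt_mul_norm_sq_add {E F : Type*} [NormedAddCommGroup E] [InnerProductSpace ℝ E]
    [NormedAddCommGroup F] [InnerProductSpace ℝ F] [FiniteDimensional ℝ E] [FiniteDimensional ℝ F]
    (A : E →ₗ[ℝ] F) (b : F) (c : ℝ) (x : E) :
    HasGradientAt (fun x => c * ‖A x + b‖ ^ 2) (LinearMap.adjoint A ((2 * c) • (A x + b))) x := by
  have hA : HasFDerivAt (fun x => A x + b) (LinearMap.toContinuousLinearMap A) x :=
    (LinearMap.toContinuousLinearMap A).hasFDerivAt.add_const b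
  refine hasGradientAt_iff_hasFDerivAt.2 ((hA.norm_sq.const_mul c).congr_fderiv ?_)
  ext v
  simp [LinearMap.adjoint_inner_left, mul_assoc, mul_left_comm]

theorem aggregate_subproblem_optimality_general {n m : ℕ}
    (f : EuclideanSpace ℝ (Fin n) → EReal)
    (hconv : EConvexFn f) (hproper : EProper f)
    (K : Set (EuclideanSpace ℝ (Fin m)))
    (hKconv : Convex ℝ K)
    (hcone : ∀ c : ℝ, 0 < c → ∀ x ∈ K, c • x ∈ K)
    (A : EuclideanSpace ℝ (Fin n) →ₗ[ℝ] EuclideanSpace ℝ (Fin m))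
    (r : EuclideanSpace ℝ (Fin m)) (γ : ℝ) (hγ : 0 < γ)
    (xh : EuclideanSpace ℝ (Fin n)) (th : EuclideanSpace ℝ (Fin m))
    (hthK : th ∈ K)
    (hmin : ∀ x, ∀ t ∈ K,
      f xh + (((1 / (2 * γ)) * ‖A xh + r - th‖ ^ 2 : ℝ) : EReal)
        ≤ f x + (((1 / (2 * γ)) * ‖A x + r - t‖ ^ 2 : ℝ) : EReal)) :
    th = projSet K (A xh + r) ∧ th ∈ K ∧
    -(LinearMap.adjoint A ((1 / γ) • projSet (polarSet K) (A xh + r))) ∈ ESubdiff f xh ∧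
    (1 / γ) • projSet (polarSet K) (A xh + r) ∈ nCone K th := by
  set φ := fun x => 1 / (2 * γ) * ‖A x + (r - th)‖ ^ 2
  have hmin_x : ∀ x, f xh + (φ xh : EReal) ≤ f x + φ x := fun x => by
    simpa only [φ, add_sub_assoc] using hmin x th hthK
  have hfin : f xh ≠ ⊤ := hproper.ne_top_of_forall_le_add hmin_x
  obtain ⟨a, ha⟩ : ∃ a : ℝ, f xh = a := ⟨_, (EReal.coe_toReal hfin (hproper.1 xh)).symm⟩
  have hnormal : A xh + r - th ∈ nCone K th := by
    refine (forall_norm_sub_le_iff_sub_mem_nCone hKconv hthK).1 fun t ht => ?_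
    have h := hmin xh t ht
    rw [ha, ← EReal.coe_add, ← EReal.coe_add, EReal.coe_le_coe_iff, add_le_add_iff_left,
      mul_le_mul_iff_right₀ (by positivity)] at h
    exact (pow_le_pow_iff_left₀ (norm_nonneg _) (norm_nonneg _) two_ne_zero).1 h
  have hpolar := projSet_polarSet_eq_sub_of_sub_mem_nCone hcone hthK hnormal
  have hgrad := hasGradientAt_mul_norm_sq_add A (r - th) (1 / (2 * γ)) xh
  rw [show 2 * (1 / (2 * γ)) = 1 / γ by field_simp, ← add_sub_assoc] at hgrad
  refine ⟨(projSet_eq_of_sub_mem_nCone hKconv hthK hnormal).symm, hthK, ?_, ?_⟩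
  · rw [hpolar]
    exact neg_mem_eSubdiff_of_forall_le_add hconv hproper.1 hfin hgrad hmin_x
  · rw [hpolar]
    intro w hw
    rw [real_inner_smul_left]
    exact mul_nonpos_of_nonneg_of_nonpos (by positivity) (hnormal w hw)

/-- **Optimality conditions generated by the aggregate ADMM subproblem.**
If `(x̂, t̂)` minimizes `f(x) + (1/(2γ))‖Ax + r − t‖²` over `ℝⁿ × K` and
`ŷ := (1/γ) Π_{K∘}(A x̂ + r)`, then `t̂ = Π_K(A x̂ + r) ∈ K`, `−Aᵀ ŷ ∈ ∂f(x̂)`,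
and `ŷ ∈ N_K(t̂)`. -/
theorem aggregate_subproblem_optimality {n m : ℕ}
    (f : EuclideanSpace ℝ (Fin n) → EReal)
    (hconv : EConvexFn f) (hlsc : LowerSemicontinuous f) (hproper : EProper f)
    (K : Set (EuclideanSpace ℝ (Fin m)))
    (hne : K.Nonempty) (hcl : IsClosed K) (hKconv : Convex ℝ K)
    (hcone : ∀ c : ℝ, 0 < c → ∀ x ∈ K, c • x ∈ K)
    (A : EuclideanSpace ℝ (Fin n) →ₗ[ℝ] EuclideanSpace ℝ (Fin m))
    (r : EuclideanSpace ℝ (Fin m)) (γ : ℝ) (hγ : 0 < γ)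
    (xh : EuclideanSpace ℝ (Fin n)) (th : EuclideanSpace ℝ (Fin m))
    (hthK : th ∈ K)
    (hmin : ∀ x, ∀ t ∈ K,
      f xh + (((1 / (2 * γ)) * ‖A xh + r - th‖ ^ 2 : ℝ) : EReal)
        ≤ f x + (((1 / (2 * γ)) * ‖A x + r - t‖ ^ 2 : ℝ) : EReal)) :
    th = projSet K (A xh + r) ∧ th ∈ K ∧
    -(LinearMap.adjoint A ((1 / γ) • projSet (polarSet K) (A xh + r))) ∈ ESubdiff f xh ∧
    (1 / γ) • projSet (polarSet K) (A xh + r) ∈ nCone K th :=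
  aggregate_subproblem_optimality_general f hconv hproper K hKconv hcone A r γ hγ xh th hthK hmin
end

section
/- Asymptotic primal feasibility of the decomposed dual consensus ADMM. Let σ > 0, ρ > 0 and suppose, for each i ∈ 𝒩, the sequences satisfy p_i^0 = 0 and, for all k ≥ 0: p_i^{k+1} = p_i^k + ρ ∑_{j∈𝒩_i} (y_i^k − y_j^k); s_i^{k+1} = s_i^k + σ (y_i^k − z_i^k); r_i^{k+1} = σ z_i^k + ρ ∑_{j∈𝒩_i} (y_i^k + y_j^k) − (b_i + p_i^{k+1} + s_i^{k+1}); x_i^{k+1} is a global minimizer over x_i ∈ ℝ^{n_i} of f_i(x_i) + (1/(2(σ + 2 ρ d_i))) ‖A_i x_i + r_i^{k+1}‖²; y_i^{k+1} = (A_i x_i^{k+1} + r_i^{k+1})/(σ + 2 ρ d_i); and z_i^{k+1} = Π_{K∘}(y_i^{k+1} + (1/σ) s_i^{k+1}). If there is y* ∈ ℝ^m with y_i^k → y* and z_i^k → y* for every i ∈ 𝒩, then ∑_{i∈𝒩} (A_i x_i^k − b_i) − ∑_{i∈𝒩} s_i^k → 0 as k → ∞. -/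
/-!
Writing `cᵢ = σ + 2ρdᵢ`, the `y`- and `r`-updates give
`Aᵢxᵢᵏ⁺¹ − bᵢ − sᵢᵏ⁺¹ = cᵢyᵢᵏ⁺¹ − σzᵢᵏ − ρ∑ⱼ(yᵢᵏ + yⱼᵏ) + pᵢᵏ⁺¹`.
Each `p`-update adds a sum of edge differences `yᵢ − yⱼ`, which cancels over the
symmetric graph, so `∑ᵢ pᵢᵏ = 0` for all `k`. If all `yᵢ` and `zᵢ` tend to `y*`,
the remaining term tends to `(cᵢ − σ − 2ρdᵢ) y* = 0` at every node.
-/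

open Filter Topology RealInnerProductSpace

namespace SimpleGraph

variable {V E : Type*} [Fintype V] (G : SimpleGraph V) [DecidableRel G.Adj]

theorem sum_sum_neighborFinset_swap [AddCommMonoid E] (g : V → V → E) :
    ∑ i, ∑ j ∈ G.neighborFinset i, g i j = ∑ i, ∑ j ∈ G.neighborFinset i, g j i :=
  Finset.sum_comm' fun i j => by simp [G.adj_comm]

theorem sum_sum_neighborFinset_sub [AddCommGroup E] (g : V → E) :
    ∑ i, ∑ j ∈ G.neighborFinset i, (g i - g j) = 0 := by
  simp only [Finset.sum_sub_distrib]
  rw [G.sum_sum_neighborFinset_swap fun _ j => g j, sub_self]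

theorem sum_eq_zero_of_neighbor_difference_updates {R : Type*} [Semiring R]
    [AddCommGroup E] [Module R E] (ρ : R) (p y : V → ℕ → E) (hp0 : ∀ i, p i 0 = 0)
    (hp : ∀ i k, p i (k + 1) = p i k + ρ • ∑ j ∈ G.neighborFinset i, (y i k - y j k))
    (k : ℕ) : ∑ i, p i k = 0 := by
  induction k with
  | zero => simp [hp0]
  | succ k ih =>
    simp only [hp, Finset.sum_add_distrib, ih, ← Finset.smul_sum,
      G.sum_sum_neighborFinset_sub, smul_zero, add_zero]

theorem tendsto_smul_sub_smul_sub_smul_sum_neighborFinset [NormedAddCommGroup E]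
    [NormedSpace ℝ E] (σ ρ : ℝ) (y z : V → ℕ → E)
    (ystar : E) (hylim : ∀ i, Tendsto (y i) atTop (𝓝 ystar))
    (hzlim : ∀ i, Tendsto (z i) atTop (𝓝 ystar)) (i : V) :
    Tendsto (fun k => (σ + 2 * ρ * (G.degree i : ℝ)) • y i (k + 1) - σ • z i k
      - ρ • ∑ j ∈ G.neighborFinset i, (y i k + y j k)) atTop (𝓝 0) := by
  have hlimit_eq_zero : (σ + 2 * ρ * (G.degree i : ℝ)) • ystar - σ • ystar
      - ρ • ∑ _j ∈ G.neighborFinset i, (ystar + ystar) = 0 := by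
    rw [Finset.sum_const, card_neighborFinset_eq_degree, ← Nat.cast_smul_eq_nsmul ℝ]
    module
  rw [← hlimit_eq_zero]
  refine ((((hylim i).comp (tendsto_add_atTop_nat 1)).const_smul _).sub
    ((hzlim i).const_smul σ)).sub ((tendsto_finsetSum _ fun j _ => ?_).const_smul ρ)
  exact (hylim i).add (hylim j)

end SimpleGraph

theorem sub_sub_eq_of_admm_updates {E : Type*} [AddCommGroup E] [Module ℝ E]
    {c σ ρ : ℝ} (hc : c ≠ 0) {Ax b s p r y z S : E}
    (hr : r = σ • z + ρ • S - (b + p + s)) (hy : y = (1 / c) • (Ax + r)) :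
    Ax - b - s = c • y - σ • z - ρ • S + p := by
  rw [hy, smul_smul, mul_one_div_cancel hc, one_smul, hr]
  abel

theorem decomposed_admm_asymptotic_feasibility_general
    {N : Type*} [Fintype N] {m : ℕ} {n : N → ℕ}
    (G : SimpleGraph N) [DecidableRel G.Adj]
    (A : ∀ i, EuclideanSpace ℝ (Fin (n i)) →ₗ[ℝ] EuclideanSpace ℝ (Fin m))
    (b : N → EuclideanSpace ℝ (Fin m))
    (σ ρ : ℝ) (hσ : 0 < σ) (hρ : 0 < ρ)
    (p s r y z : N → ℕ → EuclideanSpace ℝ (Fin m))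
    (x : ∀ i, ℕ → EuclideanSpace ℝ (Fin (n i)))
    (hp0 : ∀ i, p i 0 = 0)
    (hp : ∀ i k, p i (k + 1)
      = p i k + ρ • ∑ j ∈ G.neighborFinset i, (y i k - y j k))
    (hr : ∀ i k, r i (k + 1)
      = σ • z i k + ρ • ∑ j ∈ G.neighborFinset i, (y i k + y j k)
        - (b i + p i (k + 1) + s i (k + 1)))
    (hy : ∀ i k, y i (k + 1)
      = (1 / (σ + 2 * ρ * (G.degree i : ℝ))) • (A i (x i (k + 1)) + r i (k + 1)))
    (ystar : EuclideanSpace ℝ (Fin m))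
    (hylim : ∀ i, Tendsto (fun k => y i k) atTop (nhds ystar))
    (hzlim : ∀ i, Tendsto (fun k => z i k) atTop (nhds ystar)) :
    Tendsto (fun k => (∑ i, (A i (x i k) - b i)) - ∑ i, s i k) atTop (nhds 0) := by
  have hc : ∀ i, σ + 2 * ρ * (G.degree i : ℝ) ≠ 0 := fun i => by positivity
  have hstep : ∀ k, (∑ i, (A i (x i (k + 1)) - b i)) - ∑ i, s i (k + 1)
      = ∑ i, ((σ + 2 * ρ * (G.degree i : ℝ)) • y i (k + 1) - σ • z i k
          - ρ • ∑ j ∈ G.neighborFinset i, (y i k + y j k)) := fun k => calc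
    _ = ∑ i, (A i (x i (k + 1)) - b i - s i (k + 1)) := (Finset.sum_sub_distrib ..).symm
    _ = ∑ i, ((σ + 2 * ρ * (G.degree i : ℝ)) • y i (k + 1) - σ • z i k
          - ρ • ∑ j ∈ G.neighborFinset i, (y i k + y j k) + p i (k + 1)) :=
      Finset.sum_congr rfl fun i _ => sub_sub_eq_of_admm_updates (hc i) (hr i k) (hy i k)
    _ = _ := by
      rw [Finset.sum_add_distrib,
        G.sum_eq_zero_of_neighbor_difference_updates ρ p y hp0 hp (k + 1), add_zero]
  rw [← tendsto_add_atTop_iff_nat 1]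
  simp_rw [hstep]
  simpa using tendsto_finsetSum Finset.univ fun i _ =>
    G.tendsto_smul_sub_smul_sub_smul_sum_neighborFinset σ ρ y z ystar hylim hzlim i

/-- **Asymptotic primal feasibility of the decomposed dual consensus ADMM.**
If the iterates `yᵢᵏ` and `zᵢᵏ` all converge to some `y*`, then
`∑ᵢ(Aᵢxᵢᵏ − bᵢ) − ∑ᵢ sᵢᵏ → 0`. -/
theorem decomposed_admm_asymptotic_feasibility
    {N : Type*} [Fintype N] [Nonempty N] {m : ℕ} {n : N → ℕ}
    (G : SimpleGraph N) [DecidableRel G.Adj] (hdeg : ∀ i, 1 ≤ G.degree i)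
    (f : ∀ i, EuclideanSpace ℝ (Fin (n i)) → EReal)
    (hconv : ∀ i, EConvexFn (f i)) (hlsc : ∀ i, LowerSemicontinuous (f i))
    (hproper : ∀ i, EProper (f i))
    (A : ∀ i, EuclideanSpace ℝ (Fin (n i)) →ₗ[ℝ] EuclideanSpace ℝ (Fin m))
    (b : N → EuclideanSpace ℝ (Fin m))
    (K : Set (EuclideanSpace ℝ (Fin m)))
    (hne : K.Nonempty) (hcl : IsClosed K) (hKconv : Convex ℝ K)
    (hcone : ∀ c : ℝ, 0 < c → ∀ x ∈ K, c • x ∈ K)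
    (σ ρ : ℝ) (hσ : 0 < σ) (hρ : 0 < ρ)
    (p s r y z : N → ℕ → EuclideanSpace ℝ (Fin m))
    (x : ∀ i, ℕ → EuclideanSpace ℝ (Fin (n i)))
    (hp0 : ∀ i, p i 0 = 0)
    (hp : ∀ i k, p i (k + 1)
      = p i k + ρ • ∑ j ∈ G.neighborFinset i, (y i k - y j k))
    (hs : ∀ i k, s i (k + 1) = s i k + σ • (y i k - z i k))
    (hr : ∀ i k, r i (k + 1)
      = σ • z i k + ρ • ∑ j ∈ G.neighborFinset i, (y i k + y j k)
        - (b i + p i (k + 1) + s i (k + 1)))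
    (hmin : ∀ i k, ∀ xi : EuclideanSpace ℝ (Fin (n i)),
      f i (x i (k + 1)) + (((1 / (2 * (σ + 2 * ρ * (G.degree i : ℝ))))
          * ‖A i (x i (k + 1)) + r i (k + 1)‖ ^ 2 : ℝ) : EReal)
        ≤ f i xi + (((1 / (2 * (σ + 2 * ρ * (G.degree i : ℝ))))
          * ‖A i xi + r i (k + 1)‖ ^ 2 : ℝ) : EReal))
    (hy : ∀ i k, y i (k + 1)
      = (1 / (σ + 2 * ρ * (G.degree i : ℝ))) • (A i (x i (k + 1)) + r i (k + 1)))
    (hz : ∀ i k, z i (k + 1)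
      = projSet (polarSet K) (y i (k + 1) + (1 / σ) • s i (k + 1)))
    (ystar : EuclideanSpace ℝ (Fin m))
    (hylim : ∀ i, Tendsto (fun k => y i k) atTop (nhds ystar))
    (hzlim : ∀ i, Tendsto (fun k => z i k) atTop (nhds ystar)) :
    Tendsto (fun k => (∑ i, (A i (x i k) - b i)) - ∑ i, s i k) atTop (nhds 0) :=
  decomposed_admm_asymptotic_feasibility_general G A b σ ρ hσ hρ p s r y z x hp0 hp hr hy ystar
    hylim hzlim
end
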